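/- Let f be a submultiplicative (f(st) ≤ f(s)f(t)) monotone convex function on [0,∞), and let A, B be m×m positive semidefinite complex matrices. Then for each j, the j-th largest eigenvalue of f(A ∘ B) is at most the j-th largest eigenvalue of f(A) ∘ f(B), where ∘ is the Hadamard product. -/

import Mathlib

/-!
Write `A = ∑ αₚ vₚvₚᴴ` and `B = ∑ β_q w_q w_qᴴ`. For a unit vector `u`,
`⟨u, (g(A) ∘ h(B)) u⟩ = ∑ g(αₚ) h(β_q) |⟨u, vₚ ∘ w_q⟩|²`, and the weights `|⟨u, vₚ ∘ w_q⟩|²` sum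
to `‖u‖² = 1` (take `g = h = 1`). Jensen's inequality for `f` followed by submultiplicativity gives
`f(⟨u, (A ∘ B) u⟩) ≤ ⟨u, (f(A) ∘ f(B)) u⟩`.

For monotone `f` put `c = f(λⱼ(A ∘ B))`. On the span of the eigenvectors of `A ∘ B` for its `m - j`
smallest eigenvalues the quadratic form of `f(A ∘ B)` is at most `c`; on the span of those for its
`j + 1` largest eigenvalues the pointwise inequality makes the form of `f(A) ∘ f(B)` at least `c`.
The Courant–Fischer principle turns these into `λⱼ(f(A ∘ B)) ≤ c ≤ λⱼ(f(A) ∘ f(B))`. For antitone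
`f` the two ends of the spectrum exchange their roles.
-/

open Matrix
open scoped ComplexOrder Kronecker

/-- Functional calculus for Hermitian matrices: apply `f : ℝ → ℝ` to the eigenvalues in a
spectral decomposition (junk value `0` if the matrix is not Hermitian). -/
noncomputable def hermCFC {ι : Type*} [Fintype ι] [DecidableEq ι]
    (M : Matrix ι ι ℂ) (f : ℝ → ℝ) : Matrix ι ι ℂ :=
  if h : M.IsHermitian then h.cfc f else 0

/-- Eigenvalues of a Hermitian matrix listed in decreasing order:
`eigDesc M j` is the `(j+1)`-th largest eigenvalue (junk value `0` if not Hermitian). -/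
noncomputable def eigDesc {n : ℕ} (M : Matrix (Fin n) (Fin n) ℂ) : Fin n → ℝ :=
  if h : M.IsHermitian then fun j => h.eigenvalues (Tuple.sort h.eigenvalues j.rev) else 0

/-- Eigenvalues of a Hermitian matrix listed in increasing order:
`eigAsc M j` is the `(j+1)`-th smallest eigenvalue (junk value `0` if not Hermitian). -/
noncomputable def eigAsc {n : ℕ} (M : Matrix (Fin n) (Fin n) ℂ) : Fin n → ℝ :=
  if h : M.IsHermitian then fun j => h.eigenvalues (Tuple.sort h.eigenvalues j) else 0

/-- The absolute value `|X| = (XᴴX)^(1/2)` of a matrix. -/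
noncomputable def matAbs {n : ℕ} (X : Matrix (Fin n) (Fin n) ℂ) : Matrix (Fin n) (Fin n) ℂ :=
  (Matrix.posSemidef_conjTranspose_mul_self X).1.cfc Real.sqrt

/-- The Loewner order: `X ≤ Y` iff `Y - X` is positive semidefinite. -/
def loewnerLE {n : ℕ} (X Y : Matrix (Fin n) (Fin n) ℂ) : Prop := (Y - X).PosSemidef

open Finset Module

lemma hermCFC_of_isHermitian {ι : Type*} [Fintype ι] [DecidableEq ι] {M : Matrix ι ι ℂ}
    (hM : M.IsHermitian) (f : ℝ → ℝ) : hermCFC M f = hM.cfc f :=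
  dif_pos hM

theorem Submodule.exists_mem_inf_ne_zero_of_finrank_lt {K V : Type*} [DivisionRing K]
    [AddCommGroup V] [Module K V] [FiniteDimensional K V] (s t : Submodule K V)
    (h : finrank K V < finrank K s + finrank K t) : ∃ u ∈ s, u ∈ t ∧ u ≠ 0 := by
  have hsum := Submodule.finrank_sup_add_finrank_inf_eq s t
  have hsup := (s ⊔ t).finrank_le
  obtain ⟨u, hu, hu0⟩ := Submodule.exists_mem_ne_zero_of_ne_bot
    (Submodule.one_le_finrank_iff.mp (by omega) : s ⊓ t ≠ ⊥)
  exact ⟨u, (Submodule.mem_inf.mp hu).1, (Submodule.mem_inf.mp hu).2, hu0⟩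

namespace Tuple

variable {m : ℕ} {α : Type*} [LinearOrder α] {f : Fin m → α} {k i : Fin m}

lemma apply_le_of_mem_map_sort_Iic (hi : i ∈ (Iic k).map (sort f).toEmbedding) :
    f i ≤ f (sort f k) := by
  obtain ⟨l, hl, rfl⟩ := mem_map.mp hi
  exact monotone_sort f (mem_Iic.mp hl)

lemma le_apply_of_mem_map_sort_Ici (hi : i ∈ (Ici k).map (sort f).toEmbedding) :
    f (sort f k) ≤ f i := by
  obtain ⟨l, hl, rfl⟩ := mem_map.mp hi
  exact monotone_sort f (mem_Ici.mp hl)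

end Tuple

namespace Matrix

section RayleighQuotient

variable {n : Type*} [Fintype n]

noncomputable def rayleighQuotient (M : Matrix n n ℂ) (u : n → ℂ) : ℝ :=
  (star u ⬝ᵥ M *ᵥ u).re / (star u ⬝ᵥ u).re

lemma re_star_dotProduct_self_pos {u : n → ℂ} (hu : u ≠ 0) : 0 < (star u ⬝ᵥ u).re :=
  (Complex.pos_iff.mp (dotProduct_star_self_pos_iff.mpr hu)).1

lemma PosSemidef.rayleighQuotient_nonneg {M : Matrix n n ℂ} (hM : M.PosSemidef) (u : n → ℂ) :
    0 ≤ rayleighQuotient M u :=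
  div_nonneg (Complex.nonneg_iff.mp (hM.dotProduct_mulVec_nonneg u)).1
    (Complex.nonneg_iff.mp (dotProduct_star_self_nonneg u)).1

lemma re_star_dotProduct_diagonal_mulVec [DecidableEq n] (d : n → ℝ) (a : n → ℂ) :
    (star a ⬝ᵥ diagonal (Complex.ofReal ∘ d) *ᵥ a).re = ∑ i, d i * (star a i * a i).re := by
  simp only [dotProduct, mulVec_diagonal, Complex.re_sum, Function.comp_apply, Pi.star_apply]
  exact sum_congr rfl fun i _ => by rw [mul_left_comm, Complex.re_ofReal_mul]

lemma rayleighQuotient_diagonal_le [DecidableEq n] {d : n → ℝ} {c : ℝ} (hd : ∀ i, d i ≤ c)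
    {a : n → ℂ} (ha : a ≠ 0) : rayleighQuotient (diagonal (Complex.ofReal ∘ d)) a ≤ c := by
  rw [rayleighQuotient, div_le_iff₀ (re_star_dotProduct_self_pos ha),
    re_star_dotProduct_diagonal_mulVec, dotProduct, Complex.re_sum, mul_sum]
  exact sum_le_sum fun i _ => mul_le_mul_of_nonneg_right (hd i)
    (Complex.nonneg_iff.mp (star_mul_self_nonneg (a i))).1

lemma le_rayleighQuotient_diagonal [DecidableEq n] {d : n → ℝ} {c : ℝ} (hd : ∀ i, c ≤ d i)
    {a : n → ℂ} (ha : a ≠ 0) : c ≤ rayleighQuotient (diagonal (Complex.ofReal ∘ d)) a := by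
  rw [rayleighQuotient, le_div_iff₀ (re_star_dotProduct_self_pos ha),
    re_star_dotProduct_diagonal_mulVec, dotProduct, Complex.re_sum, mul_sum]
  exact sum_le_sum fun i _ => mul_le_mul_of_nonneg_right (hd i)
    (Complex.nonneg_iff.mp (star_mul_self_nonneg (a i))).1

variable {ι : Type*} [Fintype ι] [DecidableEq ι]

lemma star_mulVec_dotProduct_mulVec_of_isometry {P : Matrix n ι ℂ} (hP : Pᴴ * P = 1)
    (a b : ι → ℂ) : star (P *ᵥ a) ⬝ᵥ (P *ᵥ b) = star a ⬝ᵥ b := by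
  rw [star_mulVec, dotProduct_mulVec, vecMul_vecMul, hP, vecMul_one]

lemma rayleighQuotient_mulVec_of_isometry {P : Matrix n ι ℂ} (hP : Pᴴ * P = 1)
    {Y : Matrix n n ℂ} {d : ι → ℝ} (hYP : Y * P = P * diagonal (Complex.ofReal ∘ d))
    (a : ι → ℂ) :
    rayleighQuotient Y (P *ᵥ a) = rayleighQuotient (diagonal (Complex.ofReal ∘ d)) a := by
  rw [rayleighQuotient, rayleighQuotient, mulVec_mulVec, hYP, ← mulVec_mulVec,
    star_mulVec_dotProduct_mulVec_of_isometry hP, star_mulVec_dotProduct_mulVec_of_isometry hP]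

end RayleighQuotient

section ColSpan

variable {n : Type*} [Fintype n] [DecidableEq n]

def colSpan (U : Matrix n n ℂ) (S : Finset n) : Submodule ℂ (n → ℂ) :=
  LinearMap.range (U.submatrix id ((↑) : S → n)).mulVecLin

variable {U Y : Matrix n n ℂ}

lemma conjTranspose_submatrix_mul_submatrix_col {ι : Type*} [DecidableEq ι]
    (hU : Uᴴ * U = 1) {g : ι → n} (hg : g.Injective) :
    (U.submatrix id g)ᴴ * U.submatrix id g = 1 := by
  rw [conjTranspose_submatrix, ← submatrix_mul _ _ _ _ _ Function.bijective_id, hU,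
    submatrix_one _ hg]

lemma mul_submatrix_col_eq {ι : Type*} [Fintype ι] [DecidableEq ι] {D : n → ℂ}
    (hYU : Y * U = U * diagonal D) (g : ι → n) :
    Y * U.submatrix id g = U.submatrix id g * diagonal (D ∘ g) := by
  refine Matrix.ext fun i s => ?_
  rw [mul_diagonal]
  have h := congrFun (congrFun hYU i) (g s)
  rw [mul_diagonal] at h
  simpa [mul_apply] using h

lemma finrank_colSpan (hU : Uᴴ * U = 1) (S : Finset n) : finrank ℂ (colSpan U S) = #S := by
  rw [colSpan, LinearMap.finrank_range_of_inj, finrank_fintype_fun_eq_card, Fintype.card_coe]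
  intro a b hab
  have h := congrArg ((U.submatrix id ((↑) : S → n))ᴴ *ᵥ ·) hab
  simpa only [mulVecLin_apply, mulVec_mulVec,
    conjTranspose_submatrix_mul_submatrix_col hU Subtype.val_injective, one_mulVec] using h

lemma exists_rayleighQuotient_eq_diagonal_of_mem_colSpan (hU : Uᴴ * U = 1) {d : n → ℝ}
    (hYU : Y * U = U * diagonal (Complex.ofReal ∘ d)) {S : Finset n} {u : n → ℂ}
    (hu : u ∈ colSpan U S) (hu0 : u ≠ 0) :
    ∃ a : S → ℂ, a ≠ 0 ∧
      rayleighQuotient Y u = rayleighQuotient (diagonal (Complex.ofReal ∘ d ∘ (↑))) a := by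
  obtain ⟨a, rfl⟩ := hu
  refine ⟨a, fun ha => hu0 (by rw [ha, map_zero]), ?_⟩
  exact rayleighQuotient_mulVec_of_isometry
    (conjTranspose_submatrix_mul_submatrix_col hU Subtype.val_injective)
    (mul_submatrix_col_eq hYU _) a

lemma rayleighQuotient_le_of_mem_colSpan (hU : Uᴴ * U = 1) {d : n → ℝ}
    (hYU : Y * U = U * diagonal (Complex.ofReal ∘ d)) {S : Finset n} {c : ℝ}
    (hd : ∀ i ∈ S, d i ≤ c) {u : n → ℂ} (hu : u ∈ colSpan U S) (hu0 : u ≠ 0) :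
    rayleighQuotient Y u ≤ c := by
  obtain ⟨a, ha, h⟩ := exists_rayleighQuotient_eq_diagonal_of_mem_colSpan hU hYU hu hu0
  rw [h]
  exact rayleighQuotient_diagonal_le (fun s : S => hd s s.2) ha

lemma le_rayleighQuotient_of_mem_colSpan (hU : Uᴴ * U = 1) {d : n → ℝ}
    (hYU : Y * U = U * diagonal (Complex.ofReal ∘ d)) {S : Finset n} {c : ℝ}
    (hd : ∀ i ∈ S, c ≤ d i) {u : n → ℂ} (hu : u ∈ colSpan U S) (hu0 : u ≠ 0) :
    c ≤ rayleighQuotient Y u := by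
  obtain ⟨a, ha, h⟩ := exists_rayleighQuotient_eq_diagonal_of_mem_colSpan hU hYU hu hu0
  rw [h]
  exact le_rayleighQuotient_diagonal (fun s : S => hd s s.2) ha

end ColSpan

section Hadamard

variable {n : Type*} [Fintype n]

lemma star_dotProduct_vecMulVec_mulVec (x u : n → ℂ) :
    star u ⬝ᵥ vecMulVec x (star x) *ᵥ u = Complex.normSq (star u ⬝ᵥ x) := by
  rw [vecMulVec_mulVec, op_smul_eq_smul, dotProduct_smul, smul_eq_mul,
    Complex.normSq_eq_conj_mul_self, star_dotProduct]
  rfl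

variable [DecidableEq n]

lemma conj_diagonal_hadamard_conj_diagonal (U W : Matrix n n ℂ) (D E : n → ℂ) :
    (U * diagonal D * Uᴴ) ⊙ (W * diagonal E * Wᴴ)
      = ∑ p, ∑ q, (D p * E q) • vecMulVec (fun i => U i p * W i q)
          (star fun i => U i p * W i q) := by
  ext i k
  rw [hadamard_apply, mul_apply, mul_apply, Finset.sum_mul_sum]
  simp only [mul_diagonal, conjTranspose_apply, Matrix.sum_apply, smul_apply, vecMulVec_apply,
    Pi.star_apply, star_mul', smul_eq_mul]
  exact Finset.sum_congr rfl fun p _ => Finset.sum_congr rfl fun q _ => by ring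

lemma star_dotProduct_hadamard_mulVec_conj_diagonal (U W : Matrix n n ℂ) (D E : n → ℂ)
    (u : n → ℂ) :
    star u ⬝ᵥ ((U * diagonal D * Uᴴ) ⊙ (W * diagonal E * Wᴴ)) *ᵥ u
      = ∑ p, ∑ q, D p * E q * Complex.normSq (star u ⬝ᵥ fun i => U i p * W i q) := by
  simp only [conj_diagonal_hadamard_conj_diagonal, sum_mulVec, dotProduct_sum, smul_mulVec,
    dotProduct_smul, smul_eq_mul, star_dotProduct_vecMulVec_mulVec]

namespace IsHermitian

variable {A B : Matrix n n ℂ}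

lemma cfc_eq_conj (hA : A.IsHermitian) (g : ℝ → ℝ) :
    hA.cfc g = (hA.eigenvectorUnitary : Matrix n n ℂ)
      * diagonal (Complex.ofReal ∘ g ∘ hA.eigenvalues)
      * (hA.eigenvectorUnitary : Matrix n n ℂ)ᴴ := by
  rw [IsHermitian.cfc, Unitary.conjStarAlgAut_apply, star_eq_conjTranspose]
  rfl

lemma cfc_id_eq (hA : A.IsHermitian) : hA.cfc id = A :=
  (hA.cfc_eq id).symm.trans (cfc_id ℝ A)

lemma cfc_one_eq (hA : A.IsHermitian) : hA.cfc (fun _ => 1) = 1 :=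
  (hA.cfc_eq _).symm.trans (cfc_const_one ℝ A)

lemma isHermitian_cfc (hA : A.IsHermitian) (g : ℝ → ℝ) : (hA.cfc g).IsHermitian :=
  hA.cfc_eq g ▸ cfc_predicate g A

lemma conjTranspose_eigenvectorUnitary_mul_self (hA : A.IsHermitian) :
    (hA.eigenvectorUnitary : Matrix n n ℂ)ᴴ * hA.eigenvectorUnitary = 1 := by
  rw [← star_eq_conjTranspose, Unitary.coe_star_mul_self]

lemma cfc_mul_eigenvectorUnitary (hA : A.IsHermitian) (g : ℝ → ℝ) :
    hA.cfc g * hA.eigenvectorUnitary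
      = hA.eigenvectorUnitary * diagonal (Complex.ofReal ∘ g ∘ hA.eigenvalues) := by
  rw [cfc_eq_conj, mul_assoc, conjTranspose_eigenvectorUnitary_mul_self, mul_one]

lemma mul_eigenvectorUnitary (hA : A.IsHermitian) :
    A * hA.eigenvectorUnitary
      = hA.eigenvectorUnitary * diagonal (Complex.ofReal ∘ hA.eigenvalues) := by
  simpa only [cfc_id_eq, Function.id_comp] using hA.cfc_mul_eigenvectorUnitary id

noncomputable def hadamardWeight (hA : A.IsHermitian) (hB : B.IsHermitian) (u : n → ℂ)
    (z : n × n) : ℝ :=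
  Complex.normSq (star u ⬝ᵥ fun i => hA.eigenvectorBasis z.1 i * hB.eigenvectorBasis z.2 i)

lemma re_star_dotProduct_cfc_hadamard_cfc_mulVec (hA : A.IsHermitian) (hB : B.IsHermitian)
    (g h : ℝ → ℝ) (u : n → ℂ) :
    (star u ⬝ᵥ (hA.cfc g ⊙ hB.cfc h) *ᵥ u).re
      = ∑ z, hadamardWeight hA hB u z * (g (hA.eigenvalues z.1) * h (hB.eigenvalues z.2)) := by
  rw [hA.cfc_eq_conj, hB.cfc_eq_conj, star_dotProduct_hadamard_mulVec_conj_diagonal,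
    Fintype.sum_prod_type]
  simp only [Complex.re_sum, Function.comp_apply, hadamardWeight, eigenvectorUnitary_apply]
  refine Finset.sum_congr rfl fun p _ => Finset.sum_congr rfl fun q _ => ?_
  rw [← Complex.ofReal_mul, ← Complex.ofReal_mul, Complex.ofReal_re]
  ring

lemma re_star_dotProduct_self_eq_sum_hadamardWeight (hA : A.IsHermitian) (hB : B.IsHermitian)
    (u : n → ℂ) : (star u ⬝ᵥ u).re = ∑ z, hadamardWeight hA hB u z := by
  have h := re_star_dotProduct_cfc_hadamard_cfc_mulVec hA hB (fun _ => 1) (fun _ => 1) u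
  rwa [hA.cfc_one_eq, hB.cfc_one_eq, hadamard_one, diag_one, Pi.one_def, diagonal_one,
    one_mulVec, mul_one, Finset.sum_congr rfl fun z _ => mul_one _] at h

lemma rayleighQuotient_cfc_hadamard_cfc (hA : A.IsHermitian) (hB : B.IsHermitian)
    (g h : ℝ → ℝ) (u : n → ℂ) :
    rayleighQuotient (hA.cfc g ⊙ hB.cfc h) u
      = univ.centerMass (hadamardWeight hA hB u)
          fun z => g (hA.eigenvalues z.1) * h (hB.eigenvalues z.2) := by
  rw [rayleighQuotient, re_star_dotProduct_cfc_hadamard_cfc_mulVec,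
    re_star_dotProduct_self_eq_sum_hadamardWeight hA hB, centerMass, div_eq_inv_mul]
  rfl

end IsHermitian

theorem map_rayleighQuotient_hadamard_le {f : ℝ → ℝ}
    (hsub : ∀ s t : ℝ, 0 ≤ s → 0 ≤ t → f (s * t) ≤ f s * f t)
    (hconv : ConvexOn ℝ (Set.Ici 0) f) {A B : Matrix n n ℂ} (hA : A.PosSemidef)
    (hB : B.PosSemidef) {u : n → ℂ} (hu : u ≠ 0) :
    f (rayleighQuotient (A ⊙ B) u) ≤ rayleighQuotient (hA.1.cfc f ⊙ hB.1.cfc f) u := by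
  set w := IsHermitian.hadamardWeight hA.1 hB.1 u
  have hw : ∀ z ∈ univ, 0 ≤ w z := fun z _ => Complex.normSq_nonneg _
  have hw_pos : 0 < ∑ z, w z := by
    rw [← IsHermitian.re_star_dotProduct_self_eq_sum_hadamardWeight]
    exact re_star_dotProduct_self_pos hu
  have hα := hA.eigenvalues_nonneg
  have hβ := hB.eigenvalues_nonneg
  conv_lhs => rw [← hA.1.cfc_id_eq, ← hB.1.cfc_id_eq]
  rw [IsHermitian.rayleighQuotient_cfc_hadamard_cfc, IsHermitian.rayleighQuotient_cfc_hadamard_cfc]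
  calc f (univ.centerMass w fun z => id (hA.1.eigenvalues z.1) * id (hB.1.eigenvalues z.2))
      ≤ univ.centerMass w (fun z => f (hA.1.eigenvalues z.1 * hB.1.eigenvalues z.2)) :=
        hconv.map_centerMass_le hw hw_pos fun z _ => mul_nonneg (hα _) (hβ _)
    _ ≤ univ.centerMass w (fun z => f (hA.1.eigenvalues z.1) * f (hB.1.eigenvalues z.2)) := by
        refine smul_le_smul_of_nonneg_left (sum_le_sum fun z _ => ?_) (inv_nonneg.mpr hw_pos.le)
        exact smul_le_smul_of_nonneg_left (hsub _ _ (hα _) (hβ _)) (hw z (mem_univ z))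

end Hadamard

section CourantFischer

variable {m : ℕ} {Y : Matrix (Fin m) (Fin m) ℂ}

lemma IsHermitian.eigDesc_eq (hY : Y.IsHermitian) (j : Fin m) :
    eigDesc Y j = hY.eigenvalues (Tuple.sort hY.eigenvalues j.rev) := by
  rw [eigDesc, dif_pos hY]

theorem le_eigDesc_of_le_rayleighQuotient (hY : Y.IsHermitian) (j : Fin m)
    (V : Submodule ℂ (Fin m → ℂ)) (hV : j < finrank ℂ V) {c : ℝ}
    (h : ∀ u ∈ V, u ≠ 0 → c ≤ rayleighQuotient Y u) : c ≤ eigDesc Y j := by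
  have hU := hY.conjTranspose_eigenvectorUnitary_mul_self
  obtain ⟨u, huV, huW, hu0⟩ := Submodule.exists_mem_inf_ne_zero_of_finrank_lt V
    (colSpan hY.eigenvectorUnitary ((Iic j.rev).map (Tuple.sort hY.eigenvalues).toEmbedding))
    (by rw [finrank_colSpan hU, card_map, Fin.card_Iic, Fin.val_rev, finrank_fin_fun]; omega)
  rw [hY.eigDesc_eq]
  exact (h u huV hu0).trans (rayleighQuotient_le_of_mem_colSpan hU hY.mul_eigenvectorUnitary
    (fun _ => Tuple.apply_le_of_mem_map_sort_Iic) huW hu0)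

theorem eigDesc_le_of_rayleighQuotient_le (hY : Y.IsHermitian) (j : Fin m)
    (V : Submodule ℂ (Fin m → ℂ)) (hV : m ≤ j + finrank ℂ V) {c : ℝ}
    (h : ∀ u ∈ V, u ≠ 0 → rayleighQuotient Y u ≤ c) : eigDesc Y j ≤ c := by
  have hU := hY.conjTranspose_eigenvectorUnitary_mul_self
  obtain ⟨u, huV, huW, hu0⟩ := Submodule.exists_mem_inf_ne_zero_of_finrank_lt V
    (colSpan hY.eigenvectorUnitary ((Ici j.rev).map (Tuple.sort hY.eigenvalues).toEmbedding))
    (by rw [finrank_colSpan hU, card_map, Fin.card_Ici, Fin.val_rev, finrank_fin_fun]; omega)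
  rw [hY.eigDesc_eq]
  exact (le_rayleighQuotient_of_mem_colSpan hU hY.mul_eigenvectorUnitary
    (fun _ => Tuple.le_apply_of_mem_map_sort_Ici) huW hu0).trans (h u huV hu0)

end CourantFischer

section HadamardEigenvalues

variable {m : ℕ} {N Y : Matrix (Fin m) (Fin m) ℂ} {f : ℝ → ℝ}

theorem eigDesc_cfc_le_eigDesc_of_colSpan (hN : N.IsHermitian) (hY : Y.IsHermitian)
    (hkey : ∀ u ≠ 0, f (rayleighQuotient N u) ≤ rayleighQuotient Y u) (j : Fin m)
    {S T : Finset (Fin m)} (hS : m ≤ j + #S) (hT : j < #T) {c : ℝ}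
    (hSc : ∀ i ∈ S, f (hN.eigenvalues i) ≤ c)
    (hTc : ∀ u ∈ colSpan hN.eigenvectorUnitary T, u ≠ 0 → c ≤ f (rayleighQuotient N u)) :
    eigDesc (hN.cfc f) j ≤ eigDesc Y j := by
  have hU := hN.conjTranspose_eigenvectorUnitary_mul_self
  calc eigDesc (hN.cfc f) j ≤ c :=
        eigDesc_le_of_rayleighQuotient_le (hN.isHermitian_cfc f) j _
          (by rwa [finrank_colSpan hU]) fun u hu hu0 =>
            rayleighQuotient_le_of_mem_colSpan hU (hN.cfc_mul_eigenvectorUnitary f) hSc hu hu0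
    _ ≤ eigDesc Y j :=
        le_eigDesc_of_le_rayleighQuotient hY j _ (by rwa [finrank_colSpan hU])
          fun u hu hu0 => (hTc u hu hu0).trans (hkey u hu0)

theorem eigDesc_cfc_le_eigDesc_of_monotoneOn (hN : N.PosSemidef) (hY : Y.IsHermitian)
    (hf : MonotoneOn f (Set.Ici 0))
    (hkey : ∀ u ≠ 0, f (rayleighQuotient N u) ≤ rayleighQuotient Y u) (j : Fin m) :
    eigDesc (hN.1.cfc f) j ≤ eigDesc Y j := by
  have hν := hN.eigenvalues_nonneg
  refine eigDesc_cfc_le_eigDesc_of_colSpan hN.1 hY hkey j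
    (S := (Iic j.rev).map (Tuple.sort hN.1.eigenvalues).toEmbedding)
    (T := (Ici j.rev).map (Tuple.sort hN.1.eigenvalues).toEmbedding)
    (c := f (hN.1.eigenvalues (Tuple.sort hN.1.eigenvalues j.rev))) ?_ ?_ ?_ ?_
  · rw [card_map, Fin.card_Iic, Fin.val_rev]; omega
  · rw [card_map, Fin.card_Ici, Fin.val_rev]; omega
  · exact fun i hi => hf (hν _) (hν _) (Tuple.apply_le_of_mem_map_sort_Iic hi)
  · intro u hu hu0
    have hlo := le_rayleighQuotient_of_mem_colSpan hN.1.conjTranspose_eigenvectorUnitary_mul_self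
      hN.1.mul_eigenvectorUnitary (fun _ => Tuple.le_apply_of_mem_map_sort_Ici) hu hu0
    exact hf (hν _) ((hν _).trans hlo) hlo

theorem eigDesc_cfc_le_eigDesc_of_antitoneOn (hN : N.PosSemidef) (hY : Y.IsHermitian)
    (hf : AntitoneOn f (Set.Ici 0))
    (hkey : ∀ u ≠ 0, f (rayleighQuotient N u) ≤ rayleighQuotient Y u) (j : Fin m) :
    eigDesc (hN.1.cfc f) j ≤ eigDesc Y j := by
  have hν := hN.eigenvalues_nonneg
  refine eigDesc_cfc_le_eigDesc_of_colSpan hN.1 hY hkey j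
    (S := (Ici j).map (Tuple.sort hN.1.eigenvalues).toEmbedding)
    (T := (Iic j).map (Tuple.sort hN.1.eigenvalues).toEmbedding)
    (c := f (hN.1.eigenvalues (Tuple.sort hN.1.eigenvalues j))) ?_ ?_ ?_ ?_
  · rw [card_map, Fin.card_Ici]; omega
  · rw [card_map, Fin.card_Iic]; omega
  · exact fun i hi => hf (hν _) (hν _) (Tuple.le_apply_of_mem_map_sort_Ici hi)
  · intro u hu hu0
    have hhi := rayleighQuotient_le_of_mem_colSpan hN.1.conjTranspose_eigenvectorUnitary_mul_self
      hN.1.mul_eigenvectorUnitary (fun _ => Tuple.apply_le_of_mem_map_sort_Iic) hu hu0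
    exact hf (hN.rayleighQuotient_nonneg u) (hν _) hhi

end HadamardEigenvalues

end Matrix

/-- For a submultiplicative monotone convex `f` on `[0,∞)` and positive semidefinite `A, B`,
`λⱼ↓(f(A ∘ B)) ≤ λⱼ↓(f(A) ∘ f(B))` for every `j`, where `∘` is the Hadamard product. -/
theorem stmt11 {m : ℕ} (f : ℝ → ℝ)
    (hsub : ∀ s t : ℝ, 0 ≤ s → 0 ≤ t → f (s * t) ≤ f s * f t)
    (hmono : MonotoneOn f (Set.Ici 0) ∨ AntitoneOn f (Set.Ici 0))
    (hconv : ConvexOn ℝ (Set.Ici 0) f)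
    (A B : Matrix (Fin m) (Fin m) ℂ) (hA : A.PosSemidef) (hB : B.PosSemidef) :
    ∀ j, eigDesc (hermCFC (A ⊙ B) f) j ≤ eigDesc (hermCFC A f ⊙ hermCFC B f) j := by
  intro j
  have hN := hA.hadamard hB
  have hY := (hA.1.isHermitian_cfc f).hadamard (hB.1.isHermitian_cfc f)
  have hkey : ∀ u ≠ 0, f (rayleighQuotient (A ⊙ B) u)
      ≤ rayleighQuotient (hA.1.cfc f ⊙ hB.1.cfc f) u :=
    fun u hu => map_rayleighQuotient_hadamard_le hsub hconv hA hB hu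
  rw [hermCFC_of_isHermitian hN.1, hermCFC_of_isHermitian hA.1, hermCFC_of_isHermitian hB.1]
  rcases hmono with hf | hf
  · exact eigDesc_cfc_le_eigDesc_of_monotoneOn hN hY hf hkey j
  · exact eigDesc_cfc_le_eigDesc_of_antitoneOn hN hY hf hkey j
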